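/- Let k be a field of characteristic 2, G cyclic of order 2^n with generator g, and V_i the i-dimensional kG-module on which g acts as a Jordan block with eigenvalue 1 (basis x_1,…,x_i with g·x_1 = x_1 and g·x_j = x_j + x_{j-1} for j ≥ 2). If H is the index-2 subgroup of G, then the restriction of V_i to H decomposes as V_{⌈i/2⌉} ⊕ V_{⌊i/2⌋}, where V_j denotes the indecomposable kH-module of dimension j. -/
import Mathlib


open CategoryTheory CategoryTheory.Limits MonoidalCategory

namespace Paper

variable {k G : Type} [Field k] [Group G]

/-- A representation is induced from the subgroup `H` if the underlying space
decomposes as the direct sum, over a set of coset representatives of `G/H`, of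
the translates of an `H`-stable subspace. -/
def RepInducedFrom {V : Type} [AddCommGroup V] [Module k V]
    (ρ : Representation k G V) (H : Subgroup G) : Prop :=
  ∃ (p : Submodule k V) (s : Finset G),
    (∀ h ∈ H, ∀ v ∈ p, ρ h v ∈ p) ∧
    (∀ g : G, ∃! r : G, r ∈ s ∧ r⁻¹ * g ∈ H) ∧
    iSupIndep (fun r : s => p.map (ρ (r : G))) ∧
    (⨆ r : s, p.map (ρ (r : G))) = ⊤

/-- An object of `Rep k G` is induced from the subgroup `H`. -/
def IsInducedObj (H : Subgroup G) (X : Rep k G) : Prop := RepInducedFrom X.ρ H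

/-- Two representations are isomorphic up to projective direct summands. -/
def RepIsoModProj (A B : Rep k G) : Prop :=
  ∃ P Q : Rep k G, Projective P ∧ Projective Q ∧ Nonempty ((A ⊞ P : Rep k G) ≅ B ⊞ Q)

/-- Two representations are isomorphic up to direct summands induced from `H`. -/
def RepIsoModInd (H : Subgroup G) (A B : Rep k G) : Prop :=
  ∃ X Y : Rep k G, IsInducedObj H X ∧ IsInducedObj H Y ∧
    Nonempty ((A ⊞ X : Rep k G) ≅ B ⊞ Y)

/-- `f` is a single Jordan block of size `i` with eigenvalue `1`:
the space has dimension `i` and `f - 1` has nilpotency index exactly `i`. -/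
def IsJordanEnd {V : Type} [AddCommGroup V] [Module k V]
    (f : Module.End k V) (i : ℕ) : Prop :=
  Module.finrank k V = i ∧ (f - 1) ^ i = 0 ∧ ∀ j < i, (f - 1) ^ j ≠ 0

/-- `X` is the `i`-dimensional representation on which `g` acts as a single
Jordan block with eigenvalue `1`. -/
def IsJordanBlock (X : Rep k G) (g : G) (i : ℕ) : Prop :=
  IsJordanEnd (X.ρ g : Module.End k X) i

/-- `X` is a direct summand of `A`. -/
def IsSummand (X A : Rep k G) : Prop := ∃ Y : Rep k G, Nonempty (A ≅ X ⊞ Y)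

/-- `X` is indecomposable: nonzero, and not the direct sum of two nonzero objects. -/
def IsIndecObj (X : Rep k G) : Prop :=
  ¬ IsZero X ∧ ∀ Y Z : Rep k G, Nonempty (X ≅ Y ⊞ Z) → IsZero Y ∨ IsZero Z

/-- `W` is a Heller translate (syzygy) `Ω V`: the kernel of an epimorphism onto
`V` from a projective. -/
def IsSyzygy (W V : Rep k G) : Prop :=
  ∃ (P : Rep k G) (f : P ⟶ V), Projective P ∧ Epi f ∧
    Nonempty ((kernel f : Rep k G) ≅ W)

/-- `W` is an inverse Heller translate `Ω⁻¹ V`: the cokernel of a monomorphism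
from `V` into an injective. -/
def IsCosyzygy (V W : Rep k G) : Prop :=
  ∃ (I : Rep k G) (f : V ⟶ I), Injective I ∧ Mono f ∧
    Nonempty ((cokernel f : Rep k G) ≅ W)

/-- `IsSyzygyN n V W` : `W` is an `n`-th Heller translate `Ωⁿ V`. -/
def IsSyzygyN : ℕ → Rep k G → Rep k G → Prop
  | 0, V, W => Nonempty (V ≅ W)
  | n + 1, V, W => ∃ U : Rep k G, IsSyzygyN n V U ∧ IsSyzygy W U

/-- `IsCosyzygyN n V W` : `W` is an `n`-th inverse Heller translate `Ω⁻ⁿ V`. -/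
def IsCosyzygyN : ℕ → Rep k G → Rep k G → Prop
  | 0, V, W => Nonempty (V ≅ W)
  | n + 1, V, W => ∃ U : Rep k G, IsCosyzygyN n V U ∧ IsCosyzygy U W

/-- The restriction of a representation of `G` to a subgroup `H`. -/
noncomputable def resObj (H : Subgroup G) (A : Rep k G) : Rep k ↥H :=
  Rep.of (A.ρ.comp H.subtype)

end Paper

open Paper

section AuxLemmas
variable {k V : Type} [Field k] [AddCommGroup V] [Module k V]

lemma cyclic_pow_zero (M : Module.End k V) (w : V) (c : ℕ) (hc : (M ^ c) w = 0) :
    ∀ a, c ≤ a → (M ^ a) w = 0 := by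
  intro a ha
  have h : M ^ a = M ^ (a - c) * M ^ c := by rw [← pow_add]; congr 1; omega
  rw [h, Module.End.mul_apply, hc, map_zero]

lemma cyclicJordan (M : Module.End k V) (w : V) (c : ℕ) (hc : (M ^ c) w = 0)
    (hw : ∀ j < c, (M ^ j) w ≠ 0)
    (hli : LinearIndependent k (fun j : Fin c => (M ^ (j : ℕ)) w)) :
    ∃ hS : ∀ x ∈ Submodule.span k (Set.range fun j : Fin c => (M ^ (j : ℕ)) w),
        M x ∈ Submodule.span k (Set.range fun j : Fin c => (M ^ (j : ℕ)) w),
      Module.finrank k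
          ↥(Submodule.span k (Set.range fun j : Fin c => (M ^ (j : ℕ)) w)) = c ∧
      M.restrict hS ^ c = 0 ∧ ∀ j < c, M.restrict hS ^ j ≠ 0 := by
  set S := Submodule.span k (Set.range fun j : Fin c => (M ^ (j : ℕ)) w) with hSdef
  have hmemS : ∀ a : ℕ, (M ^ a) w ∈ S := by
    intro a
    by_cases h : a < c
    · exact Submodule.subset_span ⟨⟨a, h⟩, rfl⟩
    · rw [cyclic_pow_zero M w c hc a (by omega)]; exact zero_mem S
  have hS : ∀ x ∈ S, M x ∈ S := by
    intro x hx
    refine Submodule.span_induction ?_ ?_ ?_ ?_ hx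
    · rintro x ⟨j, rfl⟩
      have h : M ((M ^ (j : ℕ)) w) = (M ^ ((j : ℕ) + 1)) w := by
        rw [pow_succ', Module.End.mul_apply]
      rw [h]; exact hmemS _
    · rw [map_zero]; exact zero_mem S
    · intro x y _ _ hx hy; rw [map_add]; exact add_mem hx hy
    · intro a x _ hx; rw [map_smul]; exact S.smul_mem a hx
  have hpowS : ∀ x ∈ S, (M ^ c) x = 0 := by
    intro x hx
    refine Submodule.span_induction ?_ ?_ ?_ ?_ hx
    · rintro x ⟨j, rfl⟩
      rw [← Module.End.mul_apply, ← pow_add]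
      exact cyclic_pow_zero M w c hc _ (by omega)
    · exact map_zero _
    · intro x y _ _ hx hy; rw [map_add, hx, hy, add_zero]
    · intro a x _ hx; rw [map_smul, hx, smul_zero]
  have hw0 : w ∈ S := by
    have := hmemS 0
    rwa [pow_zero, Module.End.one_apply] at this
  refine ⟨hS, ?_, ?_, ?_⟩
  · rw [hSdef, finrank_span_eq_card hli, Fintype.card_fin]
  · rw [Module.End.pow_restrict c hS]
    ext x
    simp only [LinearMap.restrict_coe_apply, LinearMap.zero_apply, Submodule.coe_zero]
    exact hpowS x x.2
  · intro j hj h0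
    have h1 : (M.restrict hS ^ j) ⟨w, hw0⟩ = 0 := by rw [h0]; rfl
    rw [Module.End.pow_restrict j hS] at h1
    have h2 : (M ^ j) w = 0 := by
      have := congrArg (Subtype.val) h1
      simpa [LinearMap.restrict_coe_apply] using this
    exact hw j hj h2

lemma nilpotent_cyclic_li (N : Module.End k V) (i : ℕ) (hNi : N ^ i = 0) (v : V)
    (hv : (N ^ (i - 1)) v ≠ 0) :
    LinearIndependent k (fun j : Fin i => (N ^ (j : ℕ)) v) := by
  have hNz : ∀ a, i ≤ a → (N ^ a) v = 0 := by
    intro a ha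
    have h : N ^ a = N ^ (a - i) * N ^ i := by rw [← pow_add]; congr 1; omega
    rw [h, hNi, mul_zero, LinearMap.zero_apply]
  rw [Fintype.linearIndependent_iff]
  intro c hc
  have key : ∀ t : ℕ, ∀ j : Fin i, (j : ℕ) = t → c j = 0 := by
    intro t
    induction t using Nat.strong_induction_on with
    | _ t ih =>
      intro j hj
      have hti : t < i := hj ▸ j.2
      have h2 := congrArg (fun x => (N ^ (i - 1 - t)) x) hc
      simp only [map_sum, map_smul, map_zero] at h2
      have h3 : ∀ j' : Fin i, (N ^ (i - 1 - t)) ((N ^ (j' : ℕ)) v)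
          = (N ^ (i - 1 - t + (j' : ℕ))) v := by
        intro j'; rw [← Module.End.mul_apply, ← pow_add]
      simp only [h3] at h2
      have h4 : ∑ j' : Fin i, c j' • (N ^ (i - 1 - t + (j' : ℕ))) v
          = c j • (N ^ (i - 1)) v := by
        rw [Finset.sum_eq_single j]
        · have he : i - 1 - t + (j : ℕ) = i - 1 := by omega
          rw [he]
        · intro j' _ hne
          rcases Nat.lt_or_ge (j' : ℕ) t with h | h
          · rw [ih _ h j' rfl, zero_smul]
          · have hgt : t < (j' : ℕ) := by
              rcases Nat.lt_or_ge t (j' : ℕ) with h' | h'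
              · exact h'
              · exact absurd (Fin.ext (by omega)) hne
            rw [hNz _ (by omega), smul_zero]
        · intro h; exact absurd (Finset.mem_univ j) h
      rw [h4] at h2
      rcases smul_eq_zero.mp h2 with h | h
      · exact h
      · exact absurd h hv
  intro j; exact key (j : ℕ) j rfl

end AuxLemmas

/-- Let `k` be a field of characteristic 2, `G` cyclic of order `2^n` (`n ≥ 1`)
with generator `g`, and `X = V_i` the `i`-dimensional `kG`-module on which `g`
acts as a single Jordan block with eigenvalue 1.  Then the restriction of `V_i`
to the index-2 subgroup `H = ⟨g²⟩` decomposes as `V_⌈i/2⌉ ⊕ V_⌊i/2⌋`, where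
`V_j` is the `j`-dimensional indecomposable `kH`-module (on which the generator
`g²` of `H` acts as a single Jordan block with eigenvalue 1). -/
theorem restriction_jordan_block_decomposition {k G : Type} [Field k] [CharP k 2]
    [Group G] [Fintype G] (n : ℕ) (hn : 1 ≤ n) (hcard : Fintype.card G = 2 ^ n)
    (g : G) (hg : Subgroup.zpowers g = ⊤)
    (i : ℕ) (hi1 : 1 ≤ i) (hi2 : i ≤ 2 ^ n)
    (X : Rep k G) (hX : IsJordanBlock X g i) :
    ∃ (p q : Submodule k X)
      (hp : ∀ v ∈ p, X.ρ (g ^ 2) v ∈ p) (hq : ∀ v ∈ q, X.ρ (g ^ 2) v ∈ q),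
      (∀ h ∈ Subgroup.zpowers (g ^ 2), ∀ v ∈ p, X.ρ h v ∈ p) ∧
      (∀ h ∈ Subgroup.zpowers (g ^ 2), ∀ v ∈ q, X.ρ h v ∈ q) ∧
      IsCompl p q ∧
      IsJordanEnd ((X.ρ (g ^ 2)).restrict hp) ((i + 1) / 2) ∧
      IsJordanEnd ((X.ρ (g ^ 2)).restrict hq) (i / 2) := by
  obtain ⟨hdim, hNpow, hNne⟩ := hX
  set N : Module.End k X := X.ρ g - 1 with hNdef
  haveI : FiniteDimensional k X := FiniteDimensional.of_finrank_pos (by rw [hdim]; omega)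
  obtain ⟨v, hv⟩ : ∃ v : X, (N ^ (i - 1)) v ≠ 0 := by
    by_contra h
    push_neg at h
    exact hNne (i - 1) (by omega) (LinearMap.ext h)
  have hNz : ∀ a, i ≤ a → (N ^ a) v = 0 := by
    intro a ha
    have h : N ^ a = N ^ (a - i) * N ^ i := by rw [← pow_add]; congr 1; omega
    rw [h, hNpow, mul_zero, LinearMap.zero_apply]
  have hlow : ∀ a, a ≤ i - 1 → (N ^ a) v ≠ 0 := by
    intro a ha h0
    apply hv
    have h : N ^ (i - 1) = N ^ (i - 1 - a) * N ^ a := by rw [← pow_add]; congr 1; omega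
    rw [h, Module.End.mul_apply, h0, map_zero]
  have hli : LinearIndependent k (fun j : Fin i => (N ^ (j : ℕ)) v) :=
    nilpotent_cyclic_li N i hNpow v hv
  set M : Module.End k X := N * N with hMdef
  have hMpow : ∀ j : ℕ, M ^ j = N ^ (2 * j) := by
    intro j; rw [pow_mul, pow_two]
  have hMw : ∀ j : ℕ, (M ^ j) (N v) = (N ^ (2 * j + 1)) v := by
    intro j; rw [hMpow, pow_succ, Module.End.mul_apply]
  -- p side
  have hcp : (M ^ ((i + 1) / 2)) v = 0 := by rw [hMpow]; exact hNz _ (by omega)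
  have hwp : ∀ j < (i + 1) / 2, (M ^ j) v ≠ 0 := by
    intro j hj; rw [hMpow]; exact hlow _ (by omega)
  have hlip : LinearIndependent k (fun j : Fin ((i + 1) / 2) => (M ^ (j : ℕ)) v) := by
    have he : (fun j : Fin ((i + 1) / 2) => (M ^ (j : ℕ)) v)
        = (fun j : Fin i => (N ^ (j : ℕ)) v)
          ∘ (fun j : Fin ((i + 1) / 2) => (⟨2 * (j : ℕ), by omega⟩ : Fin i)) := by
      funext j; simp only [Function.comp]; rw [hMpow]
    rw [he]
    exact hli.comp _ (fun a b hab =>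
      Fin.ext (by have := congrArg Fin.val hab; simp only at this; omega))
  obtain ⟨hSp, hrankp, hp0, hpne⟩ := cyclicJordan M v ((i + 1) / 2) hcp hwp hlip
  -- q side
  have hcq : (M ^ (i / 2)) (N v) = 0 := by rw [hMw]; exact hNz _ (by omega)
  have hwq : ∀ j < i / 2, (M ^ j) (N v) ≠ 0 := by
    intro j hj; rw [hMw]; exact hlow _ (by omega)
  have hliq : LinearIndependent k (fun j : Fin (i / 2) => (M ^ (j : ℕ)) (N v)) := by
    have he : (fun j : Fin (i / 2) => (M ^ (j : ℕ)) (N v))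
        = (fun j : Fin i => (N ^ (j : ℕ)) v)
          ∘ (fun j : Fin (i / 2) => (⟨2 * (j : ℕ) + 1, by omega⟩ : Fin i)) := by
      funext j; simp only [Function.comp]; rw [hMw]
    rw [he]
    exact hli.comp _ (fun a b hab =>
      Fin.ext (by have := congrArg Fin.val hab; simp only at this; omega))
  obtain ⟨hSq, hrankq, hq0, hqne⟩ := cyclicJordan M (N v) (i / 2) hcq hwq hliq
  set p := Submodule.span k (Set.range fun j : Fin ((i + 1) / 2) => (M ^ (j : ℕ)) v)
    with hpdef
  set q := Submodule.span k (Set.range fun j : Fin (i / 2) => (M ^ (j : ℕ)) (N v))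
    with hqdef
  -- T - 1 = M
  have h2k : (2 : k) = 0 := by
    have := CharP.cast_eq_zero k 2
    exact_mod_cast this
  have hTM : X.ρ (g ^ 2) - 1 = M := by
    have hT2 : X.ρ (g ^ 2) = X.ρ g * X.ρ g := by rw [pow_two, map_mul]
    have e1 : (X.ρ g - 1) * (X.ρ g - 1)
        = X.ρ g * X.ρ g - (X.ρ g + X.ρ g) + 1 := by noncomm_ring
    have hff : X.ρ g + X.ρ g = 0 := by
      rw [← two_smul k (X.ρ g : Module.End k X), h2k, zero_smul]
    have h11 : (1 : Module.End k X) + 1 = 0 := by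
      rw [← two_smul k (1 : Module.End k X), h2k, zero_smul]
    have hneg : (-1 : Module.End k X) = 1 := neg_eq_of_add_eq_zero_left h11
    rw [hMdef, hNdef, hT2, e1, hff, sub_zero, sub_eq_add_neg, hneg]
  have happ : ∀ x : X, X.ρ (g ^ 2) x = M x + x := by
    intro x
    have h := congrArg (fun φ : Module.End k X => φ x) hTM
    simp only [LinearMap.sub_apply, Module.End.one_apply] at h
    exact eq_add_of_sub_eq h
  have hTp : ∀ x ∈ p, X.ρ (g ^ 2) x ∈ p := by
    intro x hx; rw [happ]; exact add_mem (hSp x hx) hx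
  have hTq : ∀ x ∈ q, X.ρ (g ^ 2) x ∈ q := by
    intro x hx; rw [happ]; exact add_mem (hSq x hx) hx
  -- full zpowers invariance
  have hzp : ∀ (S : Submodule k X), (∀ x ∈ S, X.ρ (g ^ 2) x ∈ S) →
      ∀ h ∈ Subgroup.zpowers (g ^ 2), ∀ x ∈ S, X.ρ h x ∈ S := by
    intro S hTS h hh
    obtain ⟨mm, hmm⟩ := mem_powers_iff_mem_zpowers.mpr hh
    have hmm' : (g ^ 2) ^ mm = h := hmm
    clear hmm hh
    subst hmm'
    induction mm with
    | zero => intro x hx; rw [pow_zero, map_one, Module.End.one_apply]; exact hx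
    | succ nn ih =>
      intro x hx
      rw [pow_succ (g ^ 2) nn, map_mul, Module.End.mul_apply]
      exact ih _ (hTS x hx)
  -- restrictions agree
  have hrest : ∀ (S : Submodule k X) (hTS : ∀ x ∈ S, X.ρ (g ^ 2) x ∈ S)
      (hMS : ∀ x ∈ S, M x ∈ S),
      (X.ρ (g ^ 2)).restrict hTS - 1 = M.restrict hMS := by
    intro S hTS hMS
    ext x
    have h1 : X.ρ (g ^ 2) (x : X) = M (x : X) + (x : X) := happ x
    simp only [LinearMap.sub_apply, Module.End.one_apply, AddSubgroupClass.coe_sub,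
      LinearMap.restrict_coe_apply]
    rw [h1]; abel
  -- membership helpers
  have hmemp : ∀ a : ℕ, (M ^ a) v ∈ p := by
    intro a
    by_cases h : a < (i + 1) / 2
    · exact Submodule.subset_span ⟨⟨a, h⟩, rfl⟩
    · rw [cyclic_pow_zero M v _ hcp a (by omega)]; exact zero_mem p
  have hmemq : ∀ a : ℕ, (M ^ a) (N v) ∈ q := by
    intro a
    by_cases h : a < i / 2
    · exact Submodule.subset_span ⟨⟨a, h⟩, rfl⟩
    · rw [cyclic_pow_zero M (N v) _ hcq a (by omega)]; exact zero_mem q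
  -- sup = top
  have hsp : Submodule.span k (Set.range fun j : Fin i => (N ^ (j : ℕ)) v) = ⊤ := by
    apply Submodule.eq_top_of_finrank_eq
    rw [finrank_span_eq_card hli, Fintype.card_fin, hdim]
  have htop : p ⊔ q = ⊤ := by
    rw [eq_top_iff, ← hsp, Submodule.span_le]
    rintro x ⟨j, rfl⟩
    show (N ^ (j : ℕ)) v ∈ (↑(p ⊔ q) : Set _)
    rcases Nat.even_or_odd (j : ℕ) with ⟨t, ht⟩ | ⟨t, ht⟩
    · have hx : (N ^ (j : ℕ)) v = (M ^ t) v := by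
        rw [hMpow, show 2 * t = (j : ℕ) from by omega]
      rw [hx]
      exact Submodule.mem_sup_left (hmemp t)
    · have hx : (N ^ (j : ℕ)) v = (M ^ t) (N v) := by
        rw [hMw, show 2 * t + 1 = (j : ℕ) from by omega]
      rw [hx]
      exact Submodule.mem_sup_right (hmemq t)
  -- inf = bot
  have hfr := Submodule.finrank_sup_add_finrank_inf_eq p q
  rw [htop, hrankp, hrankq, finrank_top, hdim] at hfr
  have hinf : Module.finrank k ↥(p ⊓ q) = 0 := by omega
  have hbot : p ⊓ q = ⊥ := Submodule.finrank_eq_zero.mp hinf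
  refine ⟨p, q, hTp, hTq, hzp p hTp, hzp q hTq,
    ⟨disjoint_iff.mpr hbot, codisjoint_iff.mpr htop⟩, ?_, ?_⟩
  · exact ⟨hrankp, by rw [hrest p hTp hSp]; exact hp0,
      fun j hj => by rw [hrest p hTp hSp]; exact hpne j hj⟩
  · exact ⟨hrankq, by rw [hrest q hTq hSq]; exact hq0,
      fun j hj => by rw [hrest q hTq hSq]; exact hqne j hj⟩
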